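/- arXiv:2011.08775 — 3 statements merged into one kernel-verified Lean document; each statement's English description precedes it below -/
import Mathlib

section
/- Let A₁, ..., A_e be sequences each of the form A(n) = ∏_{k₁=ℓ₁}^{n} ζ₁ ∏_{k₂=ℓ₂}^{k₁} ζ₂ ⋯ ∏_{k_r=ℓ_r}^{k_{r-1}} ζ_r, where ζ₁, ..., ζ_r ∈ ℂ are m-th roots of unity and ℓ₁, ..., ℓ_r ∈ ℕ. Then there exists λ ∈ ℕ with λ ≥ 2 and m ∣ λ, a primitive λ-th root of unity ζ_λ ∈ ℂ, and for each i complex numbers f_{i,0}, ..., f_{i,λ−1} such that A_i(n) = Σ_{j=0}^{λ−1} f_{i,j}·(ζ_λ^n)^j holds for all sufficiently large n ∈ ℕ. -/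
/-- The nested product `∏_{k₁=ℓ₁}^{n} ζ₁ ∏_{k₂=ℓ₂}^{k₁} ζ₂ ⋯ ∏_{k_r=ℓ_r}^{k_{r-1}} ζ_r`,
encoded by the list of pairs `(ζ_j, ℓ_j)`. -/
noncomputable def nestedProd : List (ℂ × ℕ) → ℕ → ℂ
  | [], _ => 1
  | p :: rest, n => ∏ k ∈ Finset.Icc p.2 n, (p.1 * nestedProd rest k)

/-! Every factor of a nested product is an `m`-th root of unity. By induction on the depth `r`,
the nested product is eventually periodic with period `m ^ r`: a block of `q * m` consecutive
factors of an eventually `q`-periodic sequence of `m`-th roots of unity is the `m`-th power of a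
block of `q` factors, hence `1`. An eventually `λ`-periodic sequence is then the inverse discrete
Fourier transform of its values, i.e. a polynomial of degree `< λ` in `ζ ^ n` for a primitive
`λ`-th root of unity `ζ`. Taking `λ = 2 m ^ (R + 1)`, with `R` the largest depth, gives a common
period of all the `A i`; the factor `2` ensures `λ ≥ 2` when `m = 1`. -/

open Finset Function

section PartialProducts

variable {M : Type*} [CommMonoid M]

theorem prod_Icc_add_eq_mul_prod_range (f : ℕ → M) {a n : ℕ} (h : a ≤ n + 1) (K : ℕ) :
    ∏ k ∈ Icc a (n + K), f k = (∏ k ∈ Icc a n, f k) * ∏ t ∈ range K, f (n + 1 + t) := by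
  induction K with
  | zero => simp
  | succ K ih =>
    rw [← add_assoc, prod_Icc_succ_top (by omega), ih, prod_range_succ, mul_assoc,
      add_right_comm n 1 K]

theorem Function.Periodic.prod_range_mul_eq_pow {d : ℕ → M} {q : ℕ} (hd : Periodic d q) (m : ℕ) :
    ∏ t ∈ range (q * m), d t = (∏ t ∈ range q, d t) ^ m := by
  induction m with
  | zero => simp
  | succ m ih =>
    rw [mul_add_one, prod_range_add, ih, pow_succ]
    congr 1
    refine prod_congr rfl fun t _ => ?_
    rw [add_comm, mul_comm]
    exact hd.nat_mul m t

theorem Function.Periodic.prod_Icc_of_pow_eq_one {c : ℕ → M} {q m N : ℕ}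
    (hc : Periodic (fun n => c (n + N)) q) (hcm : ∀ k, c k ^ m = 1) (a : ℕ) :
    Periodic (fun n => ∏ k ∈ Icc a (n + (N + a)), c k) (q * m) := by
  intro n
  have hblock : Periodic (fun t => c (n + (N + a) + 1 + t)) q := fun t => by
    dsimp only
    convert hc (n + a + 1 + t) using 2 <;> omega
  simp only
  rw [add_right_comm, prod_Icc_add_eq_mul_prod_range _ (by omega), hblock.prod_range_mul_eq_pow,
    ← prod_pow, prod_eq_one fun t _ => hcm _, mul_one]

end PartialProducts

section Fourier

variable {K : Type*} [Field K]

theorem geom_sum_eq_zero_of_pow_eq_one {z : K} {k : ℕ} (hz : z ^ k = 1) (h1 : z ≠ 1) :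
    ∑ j ∈ range k, z ^ j = 0 := by
  rw [geom_sum_eq h1, hz, sub_self, zero_div]

theorem IsPrimitiveRoot.geom_sum_mul_inv_pow_eq_ite {ζ : K} {k : ℕ} (hζ : IsPrimitiveRoot ζ k)
    (hk : 0 < k) (n : ℕ) {t : ℕ} (ht : t < k) :
    ∑ j ∈ range k, (ζ ^ n * ζ⁻¹ ^ t) ^ j = if t = n % k then (k : K) else 0 := by
  have hpow : (ζ ^ n * ζ⁻¹ ^ t) ^ k = 1 := by
    rw [mul_pow, ← pow_mul, ← pow_mul, mul_comm n, mul_comm t, pow_mul, pow_mul, inv_pow,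
      hζ.pow_eq_one]
    simp
  have hone : ζ ^ n * ζ⁻¹ ^ t = 1 ↔ t = n % k := by
    rw [inv_pow, mul_inv_eq_one₀ (pow_ne_zero _ (hζ.ne_zero hk.ne')),
      (hζ.isOfFinOrder hk.ne').pow_inj_mod, ← hζ.eq_orderOf, Nat.mod_eq_of_lt ht, eq_comm]
  split_ifs with h
  · rw [hone.mpr h]
    simp
  · exact geom_sum_eq_zero_of_pow_eq_one hpow (mt hone.mp h)

theorem IsPrimitiveRoot.exists_eq_sum_pow_of_periodic {ζ : K} {k : ℕ} (hζ : IsPrimitiveRoot ζ k)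
    (hk : 0 < k) {h : ℕ → K} (hh : Periodic h k) :
    ∃ f : ℕ → K, ∀ n, h n = ∑ j ∈ range k, f j * (ζ ^ n) ^ j := by
  have : NeZero k := ⟨hk.ne'⟩
  have hk0 : (k : K) ≠ 0 := hζ.neZero'.out
  refine ⟨fun j => (k : K)⁻¹ * ∑ t ∈ range k, h t * (ζ⁻¹ ^ t) ^ j, fun n => ?_⟩
  calc h n = (k : K)⁻¹ * ∑ t ∈ range k, h t * if t = n % k then (k : K) else 0 := by
        simp only [mul_ite, mul_zero, sum_ite_eq', mem_range, Nat.mod_lt n hk, if_true]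
        rw [hh.map_mod_nat]
        field_simp
    _ = (k : K)⁻¹ * ∑ t ∈ range k, h t * ∑ j ∈ range k, (ζ ^ n * ζ⁻¹ ^ t) ^ j := by
        congr 1
        refine sum_congr rfl fun t ht => ?_
        rw [hζ.geom_sum_mul_inv_pow_eq_ite hk n (mem_range.mp ht)]
    _ = ∑ j ∈ range k, ((k : K)⁻¹ * ∑ t ∈ range k, h t * (ζ⁻¹ ^ t) ^ j) * (ζ ^ n) ^ j := by
        simp only [mul_sum, sum_mul, mul_pow]
        rw [sum_comm]
        refine sum_congr rfl fun j _ => sum_congr rfl fun t _ => ?_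
        ring

theorem IsPrimitiveRoot.exists_eventually_eq_sum_pow {ζ : K} {k : ℕ} (hζ : IsPrimitiveRoot ζ k)
    (hk : 0 < k) {g : ℕ → K} {N : ℕ} (hg : Periodic (fun n => g (n + N)) k) :
    ∃ f : ℕ → K, ∃ N' : ℕ, ∀ n, N' ≤ n → g n = ∑ j ∈ range k, f j * (ζ ^ n) ^ j := by
  -- Shift the start to a multiple of `k`, so that the shift does not change `ζ ^ n`.
  have hNk : N ≤ k * N := Nat.le_mul_of_pos_left N hk
  have hshift : Periodic (fun n => g (n + k * N)) k := fun n => by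
    dsimp only
    convert hg (n + (k * N - N)) using 2 <;> omega
  obtain ⟨f, hf⟩ := hζ.exists_eq_sum_pow_of_periodic hk hshift
  refine ⟨f, k * N, fun n hn => ?_⟩
  obtain ⟨x, rfl⟩ := Nat.exists_eq_add_of_le' hn
  rw [hf x, pow_add, pow_mul, hζ.pow_eq_one, one_pow, mul_one]

end Fourier

theorem nestedProd_pow_eq_one {m : ℕ} {L : List (ℂ × ℕ)} (hL : ∀ p ∈ L, p.1 ^ m = 1) (n : ℕ) :
    nestedProd L n ^ m = 1 := by
  induction L generalizing n with
  | nil => simp [nestedProd]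
  | cons p rest ih =>
    rw [nestedProd, ← prod_pow]
    refine prod_eq_one fun k _ => ?_
    rw [mul_pow, hL p List.mem_cons_self, one_mul,
      ih fun q hq => hL q (List.mem_cons_of_mem _ hq)]

theorem nestedProd_eventually_periodic {m : ℕ} {L : List (ℂ × ℕ)} (hL : ∀ p ∈ L, p.1 ^ m = 1) :
    ∃ N, Periodic (fun n => nestedProd L (n + N)) (m ^ L.length) := by
  induction L with
  | nil => exact ⟨0, fun _ => rfl⟩
  | cons p rest ih =>
    have hrest : ∀ q ∈ rest, q.1 ^ m = 1 := fun q hq => hL q (List.mem_cons_of_mem _ hq)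
    obtain ⟨N, hN⟩ := ih hrest
    have hfactor : Periodic (fun k => p.1 * nestedProd rest (k + N)) (m ^ rest.length) :=
      fun k => congrArg (p.1 * ·) (hN k)
    have hfactor_pow : ∀ k, (p.1 * nestedProd rest k) ^ m = 1 := fun k => by
      rw [mul_pow, hL p List.mem_cons_self, one_mul, nestedProd_pow_eq_one hrest]
    refine ⟨N + p.2, ?_⟩
    rw [List.length_cons, pow_succ]
    exact hfactor.prod_Icc_of_pow_eq_one hfactor_pow p.2

/-- Nested products over `m`-th roots of unity can all be expressed, for large `n`,
as polynomial expressions in a single sequence `ζ_λ^n` where `ζ_λ` is a primitive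
`λ`-th root of unity with `λ ≥ 2` and `m ∣ λ`. -/
theorem nested_root_of_unity_prods_eq_poly_in_single_root
    (e m : ℕ) (hm : 1 ≤ m) (A : Fin e → List (ℂ × ℕ))
    (hA : ∀ i : Fin e, ∀ p ∈ A i, p.1 ^ m = 1) :
    ∃ lam : ℕ, 2 ≤ lam ∧ m ∣ lam ∧
      ∃ ζ : ℂ, IsPrimitiveRoot ζ lam ∧
        ∀ i : Fin e, ∃ f : ℕ → ℂ, ∃ N : ℕ, ∀ n : ℕ, N ≤ n →
          nestedProd (A i) n = ∑ j ∈ Finset.range lam, f j * (ζ ^ n) ^ j := by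
  set R := univ.sup fun i => (A i).length
  have hpos : 0 < 2 * m ^ (R + 1) := by positivity
  refine ⟨2 * m ^ (R + 1), ?_, dvd_mul_of_dvd_right (dvd_pow_self m R.succ_ne_zero) 2, _,
    Complex.isPrimitiveRoot_exp _ hpos.ne', fun i => ?_⟩
  · have := Nat.one_le_pow (R + 1) m hm
    omega
  obtain ⟨N, hN⟩ := nestedProd_eventually_periodic (hA i)
  obtain ⟨c, hc⟩ : m ^ (A i).length ∣ 2 * m ^ (R + 1) :=
    dvd_mul_of_dvd_right (pow_dvd_pow m ((le_sup (mem_univ i)).trans R.le_succ)) 2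
  have hper : Periodic (fun n => nestedProd (A i) (n + N)) (2 * m ^ (R + 1)) := by
    simpa only [hc, Nat.cast_id, mul_comm] using hN.nat_mul c
  exact (Complex.isPrimitiveRoot_exp _ hpos.ne').exists_eventually_eq_sum_pow hpos hper
end

section
/- Any nested product over roots of unity, i.e. a sequence A : ℕ → ℂ of the form A(n) = ∏_{k₁=1}^{n} ζ₁ ∏_{k₂=1}^{k₁} ζ₂ ⋯ ∏_{k_r=1}^{k_{r-1}} ζ_r with all ζ_j roots of unity, is eventually periodic: there exists λ ≥ 1 such that A(n+λ) = A(n) for all n ∈ ℕ. -/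
/-- The nested product `∏_{k₁=1}^{n} ζ₁ ∏_{k₂=1}^{k₁} ζ₂ ⋯ ∏_{k_r=1}^{k_{r-1}} ζ_r`,
encoded by the list `[ζ₁, …, ζ_r]`. -/
noncomputable def nestedProdOne : List ℂ → ℕ → ℂ
  | [], _ => 1
  | ζ :: rest, n => ∏ k ∈ Finset.Icc 1 n, (ζ * nestedProdOne rest k)

/-!
Induction on the depth. If the inner product is `c`-periodic, so is the factor
`g k = ζ₁ · (inner product at k)`, and then the partial products `P n = ∏_{k ≤ n} g k` satisfy
`P (n + t c) = P n · P(c)^t`. All values are roots of unity, so `P c` has a finite order `t`,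
and `P` is `t c`-periodic.
-/

open Finset Function

namespace Function.Periodic

variable {M : Type*} [CommMonoid M] {g : ℕ → M} {c : ℕ}

theorem prod_range_add (hg : Periodic g c) (n : ℕ) :
    ∏ i ∈ range (n + c), g i = (∏ i ∈ range n, g i) * ∏ i ∈ range c, g i := by
  rw [add_comm, Finset.prod_range_add, mul_comm]
  exact congrArg (· * _) (prod_congr rfl fun i _ ↦ by rw [add_comm, hg])

theorem prod_range_mul (hg : Periodic g c) (t : ℕ) :
    ∏ i ∈ range (t * c), g i = (∏ i ∈ range c, g i) ^ t := by
  induction t with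
  | zero => simp
  | succ t ih => rw [add_one_mul, hg.prod_range_add, ih, pow_succ]

theorem prod_range (hg : Periodic g c) :
    Periodic (fun n ↦ ∏ i ∈ range n, g i) (orderOf (∏ i ∈ range c, g i) * c) := fun n ↦ by
  dsimp only
  rw [← smul_eq_mul, (hg.nsmul _).prod_range_add, smul_eq_mul, hg.prod_range_mul,
    pow_orderOf_eq_one, mul_one]

end Function.Periodic

theorem nestedProdOne_cons (ζ : ℂ) (L : List ℂ) (n : ℕ) :
    nestedProdOne (ζ :: L) n = ∏ i ∈ range n, ζ * nestedProdOne L (i + 1) := by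
  rw [nestedProdOne, ← Ico_add_one_right_eq_Icc, prod_Ico_eq_prod_range, Nat.add_sub_cancel]
  simp only [add_comm 1]

theorem isOfFinOrder_nestedProdOne {L : List ℂ} (hL : ∀ ζ ∈ L, IsOfFinOrder ζ) (n : ℕ) :
    IsOfFinOrder (nestedProdOne L n) := by
  induction L generalizing n with
  | nil => exact IsOfFinOrder.one
  | cons ζ L ih =>
    exact Submonoid.prod_mem (CommMonoid.torsion ℂ) fun k _ ↦
      (hL ζ List.mem_cons_self).mul (ih (fun z hz ↦ hL z (List.mem_cons_of_mem ζ hz)) k)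

theorem exists_periodic_nestedProdOne {L : List ℂ} (hL : ∀ ζ ∈ L, IsOfFinOrder ζ) :
    ∃ d, 0 < d ∧ Periodic (nestedProdOne L) d := by
  induction L with
  | nil => exact ⟨1, one_pos, fun _ ↦ rfl⟩
  | cons ζ L ih =>
    obtain ⟨c, hc, hper⟩ := ih fun z hz ↦ hL z (List.mem_cons_of_mem ζ hz)
    have hg : Periodic (fun i ↦ ζ * nestedProdOne L (i + 1)) c := fun i ↦ by
      simp only [add_right_comm i c, hper (i + 1)]
    have hfin : IsOfFinOrder (∏ i ∈ range c, ζ * nestedProdOne L (i + 1)) := by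
      rw [← nestedProdOne_cons]
      exact isOfFinOrder_nestedProdOne hL c
    rw [show nestedProdOne (ζ :: L) = _ from funext (nestedProdOne_cons ζ L)]
    exact ⟨_, Nat.mul_pos (orderOf_pos_iff.2 hfin) hc, hg.prod_range⟩

/-- A nested product over roots of unity is (eventually, in fact globally) periodic:
there is a `λ ≥ 1` with `A(n+λ) = A(n)` for all `n`. -/
theorem nested_root_of_unity_prod_periodic
    (L : List ℂ) (hL : ∀ ζ ∈ L, ∃ m : ℕ, 1 ≤ m ∧ ζ ^ m = 1) :
    ∃ lam : ℕ, 1 ≤ lam ∧ ∀ n : ℕ, nestedProdOne L (n + lam) = nestedProdOne L n :=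
  exists_periodic_nestedProdOne fun ζ hζ ↦ isOfFinOrder_iff_pow_eq_one.2 (hL ζ hζ)
end

section
/- Let K be a field of characteristic 0 and f, h ∈ K[x] monic irreducible polynomials. For k ∈ ℤ, one has f(x+k) = h(x) if and only if k is a root of the polynomial p(z) = res_x(h(x), f(x+z)) ∈ K[z] and deg f = deg h, where res_x denotes the resultant with respect to x. In particular, f and h are shift equivalent if and only if p(z) has an integer root (assuming deg f = deg h). -/
open Polynomial

/-- The Sylvester matrix of two polynomials `f, g` over a commutative ring, of size
`(deg g + deg f) × (deg g + deg f)`. -/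
noncomputable def sylvesterMatrix {R : Type*} [CommRing R] (f g : R[X]) :
    Matrix (Fin (g.natDegree + f.natDegree)) (Fin (g.natDegree + f.natDegree)) R :=
  fun i j =>
    if (i : ℕ) < g.natDegree then
      (if (i : ℕ) ≤ (j : ℕ) then f.coeff ((j : ℕ) - (i : ℕ)) else 0)
    else
      (if (i : ℕ) - g.natDegree ≤ (j : ℕ) then
        g.coeff ((j : ℕ) - ((i : ℕ) - g.natDegree)) else 0)

/-- The resultant `res(f, g)` of two polynomials, as the determinant of their
Sylvester matrix. -/
noncomputable def resultant {R : Type*} [CommRing R] (f g : R[X]) : R :=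
  (sylvesterMatrix f g).det

/-! Substituting `z = k` commutes with taking the resultant, since `f(x+z)` keeps the degree of
`f`; so `p(k) = res(h, f(x+k))`, which vanishes iff `h` and `f(x+k)` are not coprime. As `h` is
irreducible this means `h ∣ f(x+k)`, and two monic polynomials of equal degree dividing one
another are equal. -/

theorem sylvesterMatrix_eq_transpose_sylvester {R : Type*} [CommRing R] (f g : R[X]) :
    sylvesterMatrix f g = (Polynomial.sylvester g f g.natDegree f.natDegree).transpose := by
  have coeff_sub : ∀ (p : R[X]) (a j : ℕ), (if a ≤ j then p.coeff (j - a) else 0) =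
      if a ≤ j ∧ j ≤ a + p.natDegree then p.coeff (j - a) else 0 := by
    intro p a j
    split_ifs <;> first | rfl | omega | exact coeff_eq_zero_of_natDegree_lt (by omega)
  ext i j
  induction i using Fin.addCases <;> simp [sylvesterMatrix, Polynomial.sylvester, coeff_sub]

theorem resultant_eq_polynomial_resultant {R : Type*} [CommRing R] (f g : R[X]) :
    _root_.resultant f g = Polynomial.resultant g f := by
  rw [_root_.resultant, sylvesterMatrix_eq_transpose_sylvester, Matrix.det_transpose]
  rfl

noncomputable def shiftResultant {R : Type*} [CommRing R] (f h : R[X]) : R[X] :=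
  _root_.resultant (h.map C) ((f.map C).comp (X + C X))

theorem eval_shiftResultant {R : Type*} [CommRing R] [IsDomain R] (f h : R[X]) (k : R) :
    (shiftResultant f h).eval k = Polynomial.resultant (f.comp (X + C k)) h := by
  have eval_comp_C : (evalRingHom k).comp C = RingHom.id R := by ext; simp
  have map_shift : ((f.map C).comp (X + C X)).map (evalRingHom k) = f.comp (X + C k) := by
    simp [map_comp, map_map, eval_comp_C]
  have map_C : (h.map C).map (evalRingHom k) = h := by simp [map_map, eval_comp_C]
  have natDegree_shift : ((f.map C).comp (X + C X)).natDegree = (f.comp (X + C k)).natDegree := by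
    simp [natDegree_comp, natDegree_map_eq_of_injective C_injective]
  rw [shiftResultant, resultant_eq_polynomial_resultant, ← coe_evalRingHom, ← resultant_map_map,
    map_shift, map_C, natDegree_shift, natDegree_map_eq_of_injective C_injective]

theorem isRoot_shiftResultant_iff {K : Type*} [Field K] {f h : K[X]} (hh : h ≠ 0) (k : K) :
    (shiftResultant f h).IsRoot k ↔ ¬IsCoprime h (f.comp (X + C k)) := by
  rw [IsRoot.def, eval_shiftResultant, resultant_eq_zero_iff, isCoprime_comm]
  simp [hh]

theorem eq_of_monic_of_not_isCoprime_of_natDegree_le {K : Type*} [Field K] {g h : K[X]}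
    (hg : g.Monic) (hh : h.Monic) (hi : Irreducible h) (hc : ¬IsCoprime h g)
    (hdeg : g.natDegree ≤ h.natDegree) : g = h :=
  eq_of_monic_of_dvd_of_natDegree_le hh hg (hi.dvd_iff_not_isCoprime.mpr hc) hdeg

theorem shift_equivalence_via_resultant_general
    {K : Type*} [Field K] (f h : K[X])
    (hfm : f.Monic) (hhm : h.Monic) (hhi : Irreducible h) :
    (∀ k : ℤ,
      f.comp (X + C (k : K)) = h ↔
        ((_root_.resultant (h.map (C : K →+* K[X]))
            ((f.map (C : K →+* K[X])).comp (X + C (X : K[X])))).IsRoot (k : K)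
          ∧ f.natDegree = h.natDegree)) ∧
    (f.natDegree = h.natDegree →
      ((∃ k : ℤ, f.comp (X + C (k : K)) = h) ↔
        ∃ k : ℤ,
          (_root_.resultant (h.map (C : K →+* K[X]))
            ((f.map (C : K →+* K[X])).comp (X + C (X : K[X])))).IsRoot (k : K))) := by
  have shift_iff (k : ℤ) : f.comp (X + C (k : K)) = h ↔
      (shiftResultant f h).IsRoot (k : K) ∧ f.natDegree = h.natDegree := by
    have natDegree_shift : (f.comp (X + C (k : K))).natDegree = f.natDegree := by
      rw [natDegree_comp, natDegree_X_add_C, mul_one]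
    rw [isRoot_shiftResultant_iff hhm.ne_zero]
    constructor
    · rintro rfl
      exact ⟨by simpa [isCoprime_self] using hhi.not_isUnit, natDegree_shift.symm⟩
    · rintro ⟨hc, hdeg⟩
      exact eq_of_monic_of_not_isCoprime_of_natDegree_le (hfm.comp_X_add_C _) hhm hhi hc
        (natDegree_shift.trans hdeg).le
  exact ⟨shift_iff, fun hdeg => exists_congr fun k => (shift_iff k).trans (and_iff_left hdeg)⟩

/-- For monic irreducible `f, h ∈ K[x]` over a field `K` of characteristic 0, and
`p(z) = res_x(h(x), f(x+z)) ∈ K[z]`: for `k ∈ ℤ`, `f(x+k) = h(x)` iff `k` is a root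
of `p` and `deg f = deg h`; in particular (assuming `deg f = deg h`), `f` and `h`
are shift equivalent iff `p` has an integer root. -/
theorem shift_equivalence_via_resultant
    {K : Type*} [Field K] [CharZero K] (f h : K[X])
    (hfm : f.Monic) (hhm : h.Monic) (hfi : Irreducible f) (hhi : Irreducible h) :
    (∀ k : ℤ,
      f.comp (X + C (k : K)) = h ↔
        ((_root_.resultant (h.map (C : K →+* K[X]))
            ((f.map (C : K →+* K[X])).comp (X + C (X : K[X])))).IsRoot (k : K)
          ∧ f.natDegree = h.natDegree)) ∧
    (f.natDegree = h.natDegree →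
      ((∃ k : ℤ, f.comp (X + C (k : K)) = h) ↔
        ∃ k : ℤ,
          (_root_.resultant (h.map (C : K →+* K[X]))
            ((f.map (C : K →+* K[X])).comp (X + C (X : K[X])))).IsRoot (k : K))) :=
  shift_equivalence_via_resultant_general f h hfm hhm hhi
end
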